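/- The Thomas–Fermi energy satisfies E^{TF}(Z) = Z^{7/3} E^{TF}(1), where E^{TF}(Z) := inf { 𝓔_Z^{TF}(ρ) : ρ ∈ 𝓘 }. -/

import Mathlib

open MeasureTheory Real Filter

noncomputable section

abbrev E3 := EuclideanSpace ℝ (Fin 3)

/-- The Coulomb pairing `D(ρ,σ) = (1/2)∫∫ ρ(x)σ(y)/|x−y| dx dy`. -/
def coulD (ρ σ : E3 → ℝ) : ℝ := (1/2) * ∫ x : E3, ∫ y : E3, ρ x * σ y / ‖x - y‖

/-- The Thomas–Fermi constant `γ_TF = (6π²/q)^{2/3}`. -/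
def gammaTF (q : ℕ) : ℝ := (6 * Real.pi ^ 2 / q) ^ ((2:ℝ)/3)

/-- The atomic Thomas–Fermi functional. -/
def TFfunctional (q : ℕ) (Z : ℝ) (ρ : E3 → ℝ) : ℝ :=
  (∫ x : E3, ((3/10) * gammaTF q * ρ x ^ ((5:ℝ)/3) - (Z / ‖x‖) * ρ x)) + coulD ρ ρ

/-- The natural domain `𝓘` of the Thomas–Fermi functional: nonnegative densities in
`L^{5/3}(ℝ³)` with finite Coulomb self-energy (and finite attraction energy). -/
def TFdomain : Set (E3 → ℝ) :=
  {ρ | Measurable ρ ∧ (∀ x, 0 ≤ ρ x) ∧ MemLp ρ (ENNReal.ofReal (5/3)) ∧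
    Integrable (fun x => ρ x / ‖x‖) ∧
    Integrable (fun p : E3 × E3 => ρ p.1 * ρ p.2 / ‖p.1 - p.2‖)}

/-- The Thomas–Fermi energy `E^{TF}(Z) = inf 𝓔_Z^{TF}(𝓘)`. -/
def TFenergy (q : ℕ) (Z : ℝ) : ℝ := sInf (TFfunctional q Z '' TFdomain)

/-! Writing `Z = c³`, the dilation `ρ ↦ c⁶ ρ(c ·)` maps `𝓘` onto itself (its inverse is the
dilation by `c⁻¹`), and it multiplies each term of the functional by `c⁷`: the substitution
`x ↦ c x` costs `c⁻³` per integration, while the kinetic term `(c⁶ρ)^{5/3}` and the attraction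
`(c³/|x|) c⁶ρ = c¹⁰ ρ/|c x|` gain `c¹⁰` and the Coulomb term gains `c¹³` over two integrations.
So the sets of energies for `Z` and for `1` differ by the factor `c⁷ = Z^{7/3}`, and so do their
infima. -/

section HaarDilation

variable {E : Type*} [NormedAddCommGroup E] [NormedSpace ℝ E] [MeasurableSpace E] [BorelSpace E]
  [FiniteDimensional ℝ E] {μ : Measure E} [μ.IsAddHaarMeasure]

theorem MeasureTheory.MemLp.comp_smul {F : Type*} [NormedAddCommGroup F] {f : E → F}
    {p : ENNReal} (hf : MemLp f p μ) {c : ℝ} (hc : c ≠ 0) : MemLp (fun x => f (c • x)) p μ := by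
  have hmap : MemLp f p (μ.map (c • ·)) := by
    rw [Measure.map_addHaar_smul μ hc]
    exact hf.smul_measure ENNReal.ofReal_ne_top
  exact (Homeomorph.smul (Units.mk0 c hc)).measurableEmbedding.memLp_map_measure_iff.1 hmap

theorem integral_integral_comp_smul_of_nonneg {F : Type*} [NormedAddCommGroup F]
    [NormedSpace ℝ F] (f : E → E → F) {c : ℝ} (hc : 0 ≤ c) :
    ∫ x, ∫ y, f (c • x) (c • y) ∂μ ∂μ
      = ((c ^ Module.finrank ℝ E)⁻¹) ^ 2 • ∫ x, ∫ y, f x y ∂μ ∂μ := by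
  simp only [Measure.integral_comp_smul_of_nonneg μ (f _) c (hR := hc), integral_smul]
  rw [Measure.integral_comp_smul_of_nonneg μ (fun x => ∫ y, f x y ∂μ) c (hR := hc), smul_smul, sq]

end HaarDilation

/-- `tfDilate c ρ` is the paper's `ρ_Z` for `Z = c³`; parametrising by `c = Z^{1/3}` keeps every
exponent in the scaling computation integral. -/
def tfDilate (c : ℝ) (ρ : E3 → ℝ) : E3 → ℝ := fun x => c ^ 6 * ρ (c • x)

lemma tfDilate_tfDilate_inv {c : ℝ} (hc : c ≠ 0) (ρ : E3 → ℝ) :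
    tfDilate c (tfDilate c⁻¹ ρ) = ρ := by
  funext x
  simp only [tfDilate, smul_smul, inv_mul_cancel₀ hc, one_smul, ← mul_assoc, ← mul_pow,
    mul_inv_cancel₀ hc, one_pow, one_mul]

lemma tfDilate_div_norm {c : ℝ} (hc : 0 < c) (ρ : E3 → ℝ) (x : E3) :
    tfDilate c ρ x / ‖x‖ = c ^ 7 * (ρ (c • x) / ‖c • x‖) := by
  rw [tfDilate, norm_smul_of_nonneg hc.le]
  field_simp

lemma tfDilate_mul_tfDilate_div_norm_sub {c : ℝ} (hc : 0 < c) (ρ σ : E3 → ℝ) (x y : E3) :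
    tfDilate c ρ x * tfDilate c σ y / ‖x - y‖
      = c ^ 13 * (ρ (c • x) * σ (c • y) / ‖c • x - c • y‖) := by
  rw [tfDilate, tfDilate, ← smul_sub, norm_smul_of_nonneg hc.le]
  field_simp

lemma tfDilate_mem_TFdomain {c : ℝ} (hc : 0 < c) {ρ : E3 → ℝ} (hρ : ρ ∈ TFdomain) :
    tfDilate c ρ ∈ TFdomain := by
  obtain ⟨hmeas, hnonneg, hLp, hattr, hcoul⟩ := hρ
  -- instance search does not unfold `volume` on a product to `volume.prod volume`
  have : (volume : Measure (E3 × E3)).IsAddHaarMeasure := Measure.prod.instIsAddHaarMeasure _ _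
  refine ⟨(hmeas.comp (measurable_const_smul c)).const_mul _, fun x => ?_,
    (hLp.comp_smul hc.ne').const_mul _, ?_, ?_⟩
  · exact mul_nonneg (by positivity) (hnonneg _)
  · simp_rw [tfDilate_div_norm hc]
    exact (hattr.comp_smul hc.ne').const_mul _
  · simp_rw [tfDilate_mul_tfDilate_div_norm_sub hc]
    exact (hcoul.comp_smul (f := fun p : E3 × E3 => ρ p.1 * ρ p.2 / ‖p.1 - p.2‖) hc.ne').const_mul _

lemma image_tfDilate_TFdomain {c : ℝ} (hc : 0 < c) : tfDilate c '' TFdomain = TFdomain := by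
  refine Set.Subset.antisymm (Set.image_subset_iff.2 fun ρ hρ => tfDilate_mem_TFdomain hc hρ)
    fun ρ hρ => ?_
  exact ⟨tfDilate c⁻¹ ρ, tfDilate_mem_TFdomain (inv_pos.2 hc) hρ, tfDilate_tfDilate_inv hc.ne' ρ⟩

lemma finrank_E3 : Module.finrank ℝ E3 = 3 := finrank_euclideanSpace_fin

lemma coulD_tfDilate {c : ℝ} (hc : 0 < c) (ρ σ : E3 → ℝ) :
    coulD (tfDilate c ρ) (tfDilate c σ) = c ^ 7 * coulD ρ σ := by
  simp only [coulD, tfDilate_mul_tfDilate_div_norm_sub hc, integral_const_mul]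
  rw [integral_integral_comp_smul_of_nonneg (fun x y => ρ x * σ y / ‖x - y‖) hc.le, finrank_E3,
    smul_eq_mul]
  field_simp

lemma integral_TFlocal_tfDilate (q : ℕ) {c : ℝ} (hc : 0 < c) {ρ : E3 → ℝ} (hρ : ∀ x, 0 ≤ ρ x) :
    ∫ x, ((3/10) * gammaTF q * tfDilate c ρ x ^ ((5:ℝ)/3) - (c ^ 3 / ‖x‖) * tfDilate c ρ x)
      = c ^ 7 * ∫ x, ((3/10) * gammaTF q * ρ x ^ ((5:ℝ)/3) - (1 / ‖x‖) * ρ x) := by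
  have hpow (t : ℝ) (ht : 0 ≤ t) : (c ^ 6 * t) ^ ((5:ℝ)/3) = c ^ 10 * t ^ ((5:ℝ)/3) := by
    rw [Real.mul_rpow (by positivity) ht, ← Real.rpow_natCast, ← Real.rpow_mul hc.le]
    norm_num
  have hpoint (x : E3) :
      (3/10) * gammaTF q * tfDilate c ρ x ^ ((5:ℝ)/3) - (c ^ 3 / ‖x‖) * tfDilate c ρ x
        = c ^ 10 * ((3/10) * gammaTF q * ρ (c • x) ^ ((5:ℝ)/3) - (1 / ‖c • x‖) * ρ (c • x)) := by
    rw [tfDilate, hpow _ (hρ _), norm_smul_of_nonneg hc.le]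
    field_simp
  simp_rw [hpoint]
  rw [integral_const_mul, Measure.integral_comp_smul_of_nonneg volume
    (fun y => (3/10) * gammaTF q * ρ y ^ ((5:ℝ)/3) - (1 / ‖y‖) * ρ y) c (hR := hc.le), finrank_E3,
    smul_eq_mul]
  field_simp

lemma TFfunctional_tfDilate (q : ℕ) {c : ℝ} (hc : 0 < c) {ρ : E3 → ℝ} (hρ : ∀ x, 0 ≤ ρ x) :
    TFfunctional q (c ^ 3) (tfDilate c ρ) = c ^ 7 * TFfunctional q 1 ρ := by
  rw [TFfunctional, TFfunctional, integral_TFlocal_tfDilate q hc hρ, coulD_tfDilate hc, mul_add]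

open Pointwise in
lemma TFenergy_cube (q : ℕ) {c : ℝ} (hc : 0 < c) : TFenergy q (c ^ 3) = c ^ 7 * TFenergy q 1 := by
  have himage : TFfunctional q (c ^ 3) '' TFdomain = c ^ 7 • (TFfunctional q 1 '' TFdomain) := by
    conv_lhs => rw [← image_tfDilate_TFdomain hc]
    rw [Set.image_image, ← Set.image_smul, Set.image_image]
    exact Set.image_congr fun ρ (hρ : ρ ∈ TFdomain) => TFfunctional_tfDilate q hc hρ.2.1
  rw [TFenergy, TFenergy, himage, Real.sInf_smul_of_nonneg (by positivity), smul_eq_mul]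

theorem TFenergy_scaling_general (q : ℕ) (Z : ℝ) (hZ : 0 < Z) :
    TFenergy q Z = Z ^ ((7:ℝ)/3) * TFenergy q 1 := by
  obtain ⟨c, hc, rfl⟩ : ∃ c : ℝ, 0 < c ∧ c ^ 3 = Z :=
    ⟨Z ^ ((1:ℝ)/3), by positivity, by rw [← Real.rpow_natCast, ← Real.rpow_mul hZ.le]; norm_num⟩
  rw [TFenergy_cube q hc, ← Real.rpow_natCast c 3, ← Real.rpow_mul hc.le]
  norm_num

/-- Scaling of the Thomas–Fermi energy: `E^{TF}(Z) = Z^{7/3} E^{TF}(1)`. -/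
theorem TFenergy_scaling (q : ℕ) (hq : 1 ≤ q) (Z : ℝ) (hZ : 0 < Z) :
    TFenergy q Z = Z ^ ((7:ℝ)/3) * TFenergy q 1 :=
  TFenergy_scaling_general q Z hZ
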